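/- arXiv:0808.2308 — 2 statements merged into one kernel-verified Lean document; each statement's English description precedes it below -/
import Mathlib

section
/- Let q > 2 and let x be an irrational in (0,1) with all continued fraction digits a_i(x) ≥ q. Then for all n ≥ 1, (log ∏_{i=1}^n a_i(x)) / (log q_n(x)) ≥ 1 − 1/(q² log q). -/
/-!
Write `P = ∏ aᵢ`. The recursion gives `P ≤ qₙ ≤ ∏ (aᵢ + 1/q)`, and `log (aᵢ + 1/q) ≤ log aᵢ + 1/q²`,
so `log P ≤ log qₙ ≤ log P + n/q²`. Since also `log P ≥ n log q`, the relative error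
`(log qₙ - log P) / log qₙ` is at most `(n/q²) / (n log q)`.
-/

open Filter

/-- The Gauss map `x ↦ 1/x - ⌊1/x⌋`. -/
noncomputable def gaussMap (x : ℝ) : ℝ := 1 / x - ⌊1 / x⌋

/-- The `i`-th continued fraction digit of `x` (for `i ≥ 1`). -/
noncomputable def cfDigit (x : ℝ) (i : ℕ) : ℕ := ⌊1 / (gaussMap^[i - 1] x)⌋₊

/-- Denominators of the convergents: `q_n = a_n q_{n-1} + q_{n-2}`, `q_{-1} = 0`, `q_0 = 1`. -/
def qRec (a : ℕ → ℕ) : ℕ → ℕ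
  | 0 => 1
  | 1 => a 1
  | n + 2 => a (n + 2) * qRec a (n + 1) + qRec a n

/-- The denominator `q_n(x)` of the `n`-th convergent of `x`. -/
noncomputable def cfDenom (x : ℝ) : ℕ → ℕ := qRec (cfDigit x)

open Finset Real

theorem prod_le_qRec (a : ℕ → ℕ) : ∀ n, ∏ i ∈ Icc 1 n, a i ≤ qRec a n
  | 0 => by simp [qRec]
  | 1 => by simp [qRec]
  | n + 2 => by
    rw [qRec, prod_Icc_succ_top (by omega), mul_comm]
    exact (Nat.mul_le_mul_left _ (prod_le_qRec a (n + 1))).trans (Nat.le_add_right _ _)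

section UpperBound

variable (a : ℕ → ℕ) {c : ℝ} (hc : 0 < c) (ha : ∀ i, 1 ≤ i → c ≤ a i)
include hc ha

theorem prod_add_inv_le_div_prod_succ (n : ℕ) :
    ∏ i ∈ Icc 1 n, ((a i : ℝ) + 1 / c) ≤ (∏ i ∈ Icc 1 (n + 1), ((a i : ℝ) + 1 / c)) / c := by
  have hnext : c ≤ (a (n + 1) : ℝ) + 1 / c := by
    have := ha (n + 1) (by omega)
    have : 0 < 1 / c := by positivity
    linarith
  rw [prod_Icc_succ_top (by omega), le_div_iff₀ hc]
  exact mul_le_mul_of_nonneg_left hnext (prod_nonneg fun i _ => by positivity)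

theorem qRec_le_prod_add_inv : ∀ n, (qRec a n : ℝ) ≤ ∏ i ∈ Icc 1 n, ((a i : ℝ) + 1 / c)
  | 0 => by simp [qRec]
  | 1 => by simp [qRec]; positivity
  | n + 2 => by
    have h₁ := qRec_le_prod_add_inv (n + 1)
    have h₀ := (qRec_le_prod_add_inv n).trans (prod_add_inv_le_div_prod_succ a hc ha n)
    rw [qRec, prod_Icc_succ_top (by omega : 1 ≤ n + 2)]
    push_cast
    calc (a (n + 2) : ℝ) * qRec a (n + 1) + qRec a n
        ≤ a (n + 2) * ∏ i ∈ Icc 1 (n + 1), ((a i : ℝ) + 1 / c)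
            + (∏ i ∈ Icc 1 (n + 1), ((a i : ℝ) + 1 / c)) / c := by gcongr
      _ = (∏ i ∈ Icc 1 (n + 1), ((a i : ℝ) + 1 / c)) * (a (n + 2) + 1 / c) := by ring

end UpperBound

theorem Real.log_add_inv_le {a c : ℝ} (hc : 0 < c) (hca : c ≤ a) :
    log (a + 1 / c) ≤ log a + 1 / c ^ 2 := by
  have ha : 0 < a := hc.trans_le hca
  have h := log_le_sub_one_of_pos (show 0 < (a + 1 / c) / a by positivity)
  rw [log_div (by positivity) ha.ne'] at h
  have hratio : (a + 1 / c) / a - 1 = 1 / (c * a) := by field_simp; ring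
  have hca' : 1 / (c * a) ≤ 1 / c ^ 2 := by
    gcongr
    nlinarith
  linarith

theorem Real.log_prod_add_inv_le {ι : Type*} (s : Finset ι) (a : ι → ℝ) {c : ℝ} (hc : 0 < c)
    (ha : ∀ i ∈ s, c ≤ a i) :
    log (∏ i ∈ s, (a i + 1 / c)) ≤ log (∏ i ∈ s, a i) + #s / c ^ 2 := by
  have hpos : ∀ i ∈ s, 0 < a i := fun i hi => hc.trans_le (ha i hi)
  calc log (∏ i ∈ s, (a i + 1 / c)) = ∑ i ∈ s, log (a i + 1 / c) :=
        log_prod fun i hi => (add_pos (hpos i hi) (by positivity)).ne'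
    _ ≤ ∑ i ∈ s, (log (a i) + 1 / c ^ 2) := sum_le_sum fun i hi => log_add_inv_le hc (ha i hi)
    _ = log (∏ i ∈ s, a i) + #s / c ^ 2 := by
        rw [sum_add_distrib, sum_const, log_prod fun i hi => (hpos i hi).ne', nsmul_eq_mul,
          mul_one_div]

theorem one_sub_div_le_div_of_le_add {L D ε m : ℝ} (hm : 0 < m) (hmL : m ≤ L) (hLD : L ≤ D)
    (hDL : D ≤ L + ε) : 1 - ε / m ≤ L / D := by
  have hD : 0 < D := hm.trans_le (hmL.trans hLD)
  have hε : 0 ≤ ε := by linarith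
  calc 1 - ε / m ≤ 1 - ε / D := by gcongr; linarith
    _ = (D - ε) / D := by field_simp
    _ ≤ L / D := by gcongr; linarith

theorem large_digits_scaling_lower_bound_general (q : ℕ) (hq : 2 < q) (x : ℝ)
    (hdig : ∀ i, 1 ≤ i → q ≤ cfDigit x i) (n : ℕ) (hn : 1 ≤ n) :
    1 - 1 / ((q : ℝ) ^ 2 * Real.log q) ≤
      Real.log (∏ i ∈ Finset.Icc 1 n, (cfDigit x i : ℝ)) / Real.log (cfDenom x n) := by
  have hq₁ : (1 : ℝ) < q := by exact_mod_cast hq.trans' one_lt_two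
  have hq₀ : (0 : ℝ) < q := one_pos.trans hq₁
  have hdigR : ∀ i, 1 ≤ i → (q : ℝ) ≤ cfDigit x i := fun i hi => by exact_mod_cast hdig i hi
  have hpow : q ^ n ≤ ∏ i ∈ Icc 1 n, cfDigit x i := by
    simpa using pow_card_le_prod (Icc 1 n) (cfDigit x) q fun i hi => hdig i (mem_Icc.1 hi).1
  have hlogP : n * log q ≤ log (∏ i ∈ Icc 1 n, (cfDigit x i : ℝ)) := by
    rw [← log_pow, ← Nat.cast_prod]
    exact log_le_log (by positivity) (by exact_mod_cast hpow)
  have hPq : log (∏ i ∈ Icc 1 n, (cfDigit x i : ℝ)) ≤ log (cfDenom x n) := by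
    rw [← Nat.cast_prod]
    exact log_le_log (by exact_mod_cast (pow_pos (by omega) n).trans_le hpow)
      (by exact_mod_cast prod_le_qRec _ n)
  have hqP : log (cfDenom x n) ≤ log (∏ i ∈ Icc 1 n, (cfDigit x i : ℝ)) + n / (q : ℝ) ^ 2 := by
    refine (log_le_log ?_ (qRec_le_prod_add_inv _ hq₀ hdigR n)).trans ?_
    · exact_mod_cast (pow_pos (by omega) n).trans_le (hpow.trans (prod_le_qRec _ n))
    · simpa using log_prod_add_inv_le (Icc 1 n) (fun i => (cfDigit x i : ℝ)) hq₀
        fun i hi => hdigR i (mem_Icc.1 hi).1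
  have hmain := one_sub_div_le_div_of_le_add (by positivity [log_pos hq₁]) hlogP hPq hqP
  convert hmain using 2
  field_simp

/-- If all continued fraction digits of `x` are at least `q > 2`, then for all `n ≥ 1`
the arithmetic-geometric quotient is at least `1 − 1/(q² log q)`. -/
theorem large_digits_scaling_lower_bound (q : ℕ) (hq : 2 < q) (x : ℝ)
    (hx : x ∈ Set.Ioo (0 : ℝ) 1) (hirr : Irrational x)
    (hdig : ∀ i, 1 ≤ i → q ≤ cfDigit x i) (n : ℕ) (hn : 1 ≤ n) :
    1 - 1 / ((q : ℝ) ^ 2 * Real.log q) ≤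
      Real.log (∏ i ∈ Finset.Icc 1 n, (cfDigit x i : ℝ)) / Real.log (cfDenom x n) :=
  large_digits_scaling_lower_bound_general q hq x hdig n hn
end

section
/- If x is an irrational in (0,1) whose continued fraction digits are all bounded by M ≥ 2, then limsup_{n→∞} (log ∏_{i=1}^n a_i(x)) / (log q_n(x)) ≤ (1 + log 2 / (2 M (M+1) log M))^{−1} < 1. In particular, badly approximable numbers do not have arithmetic-geometric scaling equal to 1. -/
open Filter

/-!
With digits in `[1, M]`, the recursion `q_{n+1} = a_{n+1} q_n + q_{n-1}` and the bound
`q_n ≤ (a_n + 1) q_{n-1}` give `q_{n+1} ≥ (a_{n+1} + 1/(a_n + 1)) q_n`, and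
`1/(a_n + 1) ≥ a_{n+1}/(M(M+1))`; hence `q_n ≥ a_1 ⋯ a_n (1 + 1/(M(M+1)))^{n-1}`.
By concavity, `log (1 + t) ≥ t log 2` on `[0, 1]`, so `log q_n` exceeds
`log (a_1 ⋯ a_n) ≤ n log M` by at least `(n-1) log 2/(M(M+1))`, a fixed proportion
`log 2/(2M(M+1) log M)` of `log (a_1 ⋯ a_n)` once `n ≥ 2`.
-/

open Real Finset

lemma mul_log_two_le_log_one_add {t : ℝ} (h0 : 0 ≤ t) (h1 : t ≤ 1) :
    t * log 2 ≤ log (1 + t) := by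
  have h := strictConcaveOn_log_Ioi.concaveOn.2 (x := 1) (y := 2) (by norm_num) (by norm_num)
    (sub_nonneg.2 h1) h0 (by ring)
  simp only [smul_eq_mul, log_one, mul_zero, zero_add] at h
  exact h.trans_eq (congrArg log (by ring))

section qRec

variable {a : ℕ → ℕ}

lemma one_le_qRec (ha : ∀ i, 1 ≤ i → 1 ≤ a i) : ∀ n, 1 ≤ qRec a n
  | 0 => le_rfl
  | 1 => ha 1 le_rfl
  | n + 2 => (one_le_qRec ha n).trans (Nat.le_add_left _ _)

lemma qRec_le_qRec_succ (ha : ∀ i, 1 ≤ i → 1 ≤ a i) : ∀ n, qRec a n ≤ qRec a (n + 1)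
  | 0 => ha 1 le_rfl
  | n + 1 => calc
      qRec a (n + 1) ≤ a (n + 2) * qRec a (n + 1) :=
        Nat.le_mul_of_pos_left _ (ha (n + 2) (by omega))
      _ ≤ qRec a (n + 2) := Nat.le_add_right _ _

lemma qRec_succ_le (ha : ∀ i, 1 ≤ i → 1 ≤ a i) (n : ℕ) :
    qRec a (n + 1) ≤ (a (n + 1) + 1) * qRec a n := by
  cases n with
  | zero => simp [qRec]
  | succ n =>
    have := qRec_le_qRec_succ ha n
    simp only [qRec]
    nlinarith

lemma add_one_div_mul_qRec_le (ha : ∀ i, 1 ≤ i → 1 ≤ a i) (n : ℕ) :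
    ((a (n + 2) : ℝ) + 1 / (a (n + 1) + 1)) * qRec a (n + 1) ≤ qRec a (n + 2) := by
  have hq : (qRec a (n + 1) : ℝ) ≤ (a (n + 1) + 1) * qRec a n := by
    exact_mod_cast qRec_succ_le ha n
  have hq' : (qRec a (n + 1) : ℝ) / (a (n + 1) + 1) ≤ qRec a n := by
    rwa [div_le_iff₀ (by positivity), mul_comm]
  simp only [qRec, Nat.cast_add, Nat.cast_mul]
  linarith [add_mul (a (n + 2) : ℝ) (1 / (a (n + 1) + 1)) (qRec a (n + 1)),
    one_div_mul_eq_div (a (n + 1) + 1 : ℝ) (qRec a (n + 1))]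

lemma prod_mul_pow_le_qRec {M : ℕ} (ha : ∀ i, 1 ≤ i → 1 ≤ a i)
    (haM : ∀ i, 1 ≤ i → a i ≤ M) :
    ∀ n, (∏ i ∈ Icc 1 (n + 1), (a i : ℝ)) * (1 + 1 / (M * (M + 1))) ^ n ≤ qRec a (n + 1)
  | 0 => by simp [qRec]
  | n + 1 => by
    have hA : (1 : ℝ) ≤ a (n + 2) := by exact_mod_cast ha (n + 2) (by omega)
    have hAM : (a (n + 2) : ℝ) ≤ M := by exact_mod_cast haM (n + 2) (by omega)
    have hBM : (a (n + 1) : ℝ) ≤ M := by exact_mod_cast haM (n + 1) (by omega)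
    have hdigit :
        (a (n + 2) : ℝ) * (1 + 1 / (M * (M + 1))) ≤ a (n + 2) + 1 / (a (n + 1) + 1) := by
      have hM : (0 : ℝ) < M := by linarith
      rw [mul_one_add, mul_one_div]
      gcongr _ + ?_
      rw [div_le_div_iff₀ (by positivity) (by positivity)]
      nlinarith
    calc (∏ i ∈ Icc 1 (n + 2), (a i : ℝ)) * (1 + 1 / (M * (M + 1))) ^ (n + 1)
        = (a (n + 2) * (1 + 1 / (M * (M + 1)))) *
            ((∏ i ∈ Icc 1 (n + 1), (a i : ℝ)) * (1 + 1 / (M * (M + 1))) ^ n) := by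
          rw [prod_Icc_succ_top (by omega), pow_succ]; ring
      _ ≤ (a (n + 2) + 1 / (a (n + 1) + 1)) * qRec a (n + 1) := by
          gcongr
          exact prod_mul_pow_le_qRec ha haM n
      _ ≤ qRec a (n + 2) := add_one_div_mul_qRec_le ha n

end qRec

lemma log_prod_add_le_log_qRec {a : ℕ → ℕ} {M : ℕ} (ha : ∀ i, 1 ≤ i → 1 ≤ a i)
    (haM : ∀ i, 1 ≤ i → a i ≤ M) (m : ℕ) :
    log (∏ i ∈ Icc 1 (m + 1), (a i : ℝ)) + m * (log 2 / (M * (M + 1)))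
      ≤ log (qRec a (m + 1)) := by
  have hM : (1 : ℝ) ≤ M := by exact_mod_cast (ha 1 le_rfl).trans (haM 1 le_rfl)
  have hprod : 0 < ∏ i ∈ Icc 1 (m + 1), (a i : ℝ) :=
    prod_pos fun i hi => by exact_mod_cast ha i (mem_Icc.1 hi).1
  have hr : log 2 / (M * (M + 1)) ≤ log (1 + 1 / (M * (M + 1))) := calc
    log 2 / (M * (M + 1)) = 1 / (M * (M + 1)) * log 2 := by ring
    _ ≤ log (1 + 1 / (M * (M + 1))) := by
      refine mul_log_two_le_log_one_add (by positivity) ?_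
      rw [div_le_one (by positivity)]
      nlinarith
  have hq := log_le_log (by positivity) (prod_mul_pow_le_qRec ha haM m)
  rw [log_mul hprod.ne' (by positivity), log_pow] at hq
  nlinarith

lemma log_prod_div_log_qRec_le {a : ℕ → ℕ} {M : ℕ} (hM : 2 ≤ M)
    (ha : ∀ i, 1 ≤ i → 1 ≤ a i) (haM : ∀ i, 1 ≤ i → a i ≤ M) {n : ℕ}
    (hn : 2 ≤ n) :
    log (∏ i ∈ Icc 1 n, (a i : ℝ)) / log (qRec a n)
      ≤ (1 + log 2 / (2 * M * (M + 1) * log M))⁻¹ := by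
  obtain ⟨m, rfl⟩ : ∃ m, n = m + 1 := ⟨n - 1, by omega⟩
  have hM' : (2 : ℝ) ≤ M := by exact_mod_cast hM
  have hlogM : 0 < log M := log_pos (by linarith)
  have hm : (1 : ℝ) ≤ m := by exact_mod_cast (by omega : 1 ≤ m)
  set S := log (∏ i ∈ Icc 1 (m + 1), (a i : ℝ))
  set c := log 2 / (M * (M + 1))
  set δ := log 2 / (2 * M * (M + 1) * log M)
  have hS : S = ∑ i ∈ Icc 1 (m + 1), log (a i) :=
    log_prod fun i hi => by have := ha i (mem_Icc.1 hi).1; positivity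
  have hS0 : 0 ≤ S :=
    hS ▸ sum_nonneg fun i hi => log_nonneg (by exact_mod_cast ha i (mem_Icc.1 hi).1)
  have hSM : S ≤ (m + 1) * log M := by
    have := sum_le_card_nsmul (Icc 1 (m + 1)) (fun i => log (a i)) (log M) fun i hi =>
      log_le_log (by exact_mod_cast ha i (mem_Icc.1 hi).1)
        (by exact_mod_cast haM i (mem_Icc.1 hi).1)
    simpa [hS] using this
  have hδ : 2 * log M * δ = c := by
    simp only [δ, c]; field_simp
  have hSδ : S * δ ≤ m * c := calc
    S * δ ≤ (m + 1) * log M * δ := by gcongr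
    _ ≤ m * (2 * log M * δ) := by nlinarith [show 0 < log M * δ by positivity]
    _ = m * c := by rw [hδ]
  have hL := log_prod_add_le_log_qRec ha haM m
  have hLpos : 0 < log (qRec a (m + 1)) := by nlinarith [show 0 < c by positivity]
  rw [div_le_iff₀ hLpos, inv_mul_eq_div, le_div_iff₀ (by positivity)]
  linarith

lemma gaussMap_eq_fract (y : ℝ) : gaussMap y = Int.fract (1 / y) := rfl

lemma irrational_gaussMap {y : ℝ} (hy : Irrational y) : Irrational (gaussMap y) := by
  rw [gaussMap_eq_fract, Int.fract, one_div]
  exact hy.inv.sub_intCast _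

lemma irrational_gaussMap_iterate {y : ℝ} (hy : Irrational y) :
    ∀ k, Irrational (gaussMap^[k] y)
  | 0 => hy
  | k + 1 => by
    rw [Function.iterate_succ_apply']
    exact irrational_gaussMap (irrational_gaussMap_iterate hy k)

lemma gaussMap_mem_Ioo {y : ℝ} (hy : Irrational y) : gaussMap y ∈ Set.Ioo 0 1 := by
  rw [gaussMap_eq_fract]
  exact ⟨(Int.fract_nonneg _).lt_of_ne (irrational_gaussMap hy).ne_zero.symm,
    Int.fract_lt_one _⟩

lemma gaussMap_iterate_mem_Ioo {x : ℝ} (hx : x ∈ Set.Ioo 0 1) (hirr : Irrational x) :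
    ∀ k, gaussMap^[k] x ∈ Set.Ioo 0 1
  | 0 => hx
  | k + 1 => by
    rw [Function.iterate_succ_apply']
    exact gaussMap_mem_Ioo (irrational_gaussMap_iterate hirr k)

lemma one_le_cfDigit {x : ℝ} (hx : x ∈ Set.Ioo 0 1) (hirr : Irrational x) (i : ℕ) :
    1 ≤ cfDigit x i := by
  obtain ⟨h0, h1⟩ := gaussMap_iterate_mem_Ioo hx hirr (i - 1)
  exact Nat.le_floor (by exact_mod_cast one_le_one_div h0 h1.le)

/-- If all continued fraction digits of `x` are bounded by `M ≥ 2`, then the limsup of the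
arithmetic-geometric quotient is at most `(1 + log 2/(2M(M+1) log M))⁻¹ < 1`. -/
theorem bounded_digits_scaling_away_from_one (M : ℕ) (hM : 2 ≤ M) (x : ℝ)
    (hx : x ∈ Set.Ioo (0 : ℝ) 1) (hirr : Irrational x)
    (hdig : ∀ i, 1 ≤ i → cfDigit x i ≤ M) :
    Filter.limsup (fun n : ℕ =>
        Real.log (∏ i ∈ Finset.Icc 1 n, (cfDigit x i : ℝ)) / Real.log (cfDenom x n))
      atTop ≤ (1 + Real.log 2 / (2 * M * (M + 1) * Real.log M))⁻¹ ∧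
    (1 + Real.log 2 / (2 * (M : ℝ) * (M + 1) * Real.log M))⁻¹ < 1 := by
  have ha : ∀ i, 1 ≤ i → 1 ≤ cfDigit x i := fun i _ => one_le_cfDigit hx hirr i
  have hratio_nonneg :
      ∀ n, 0 ≤ log (∏ i ∈ Icc 1 n, (cfDigit x i : ℝ)) / log (cfDenom x n) :=
    fun n => div_nonneg
      (log_nonneg (one_le_prod fun i hi => by exact_mod_cast ha i (mem_Icc.1 hi).1))
      (log_nonneg (by exact_mod_cast one_le_qRec ha n))
  refine ⟨limsup_le_of_le
    (isCoboundedUnder_le_of_eventually_le _ (.of_forall hratio_nonneg)) ?_, ?_⟩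
  · filter_upwards [eventually_ge_atTop 2] with n hn
    exact log_prod_div_log_qRec_le hM ha hdig hn
  · have hlogM : 0 < log M := log_pos (Nat.one_lt_cast.2 hM)
    exact inv_lt_one_of_one_lt₀ (lt_add_of_pos_right 1 (by positivity))
end
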